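/- arXiv:1912.05773 — 2 statements merged into one kernel-verified Lean document; each statement's English description precedes it below -/
import Mathlib

section
/- Measure-change put–call duality (unconditional version of the Lemma): let (Ω, F, P) be a probability space and let X : Ω → ℝ be measurable with X > 0 P-almost surely and ∫ X dP = 1. Let Q be the measure P.withDensity(X) (i.e., Q(A) = ∫_A X dP). Then Q is a probability measure, and for every real K > 0: ∫ max(X − K, 0) dP = K · ∫ max(1/K − 1/X, 0) dQ. -/
open MeasureTheory ENNReal NNReal

/-- Measure-change put–call duality (unconditional version). -/
theorem put_call_duality_withDensity
    {Ω : Type*} [MeasurableSpace Ω] (P : Measure Ω) [IsProbabilityMeasure P]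
    (X : Ω → ℝ) (hX : Measurable X) (hXpos : ∀ᵐ ω ∂P, 0 < X ω)
    (hXint : ∫ ω, X ω ∂P = 1)
    (Q : Measure Ω) (hQ : Q = P.withDensity (fun ω => ENNReal.ofReal (X ω)))
    (K : ℝ) (hK : 0 < K) :
    IsProbabilityMeasure Q ∧
      ∫ ω, max (X ω - K) 0 ∂P = K * ∫ ω, max (1 / K - 1 / X ω) 0 ∂Q := by
  have hXi : Integrable X P := by
    by_contra h
    rw [integral_undef h] at hXint
    norm_num at hXint
  have hnn : 0 ≤ᵐ[P] X := hXpos.mono fun ω hω => hω.le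
  have hlint : ∫⁻ ω, ENNReal.ofReal (X ω) ∂P = 1 := by
    rw [← ofReal_integral_eq_lintegral_ofReal hXi hnn, hXint, ENNReal.ofReal_one]
  constructor
  · rw [hQ]
    constructor
    rw [withDensity_apply _ MeasurableSet.univ, setLIntegral_univ, hlint]
  · subst hQ
    have hd : (fun ω => ENNReal.ofReal (X ω)) =
        fun ω => ((X ω).toNNReal : ℝ≥0∞) := rfl
    rw [hd, integral_withDensity_eq_integral_smul (hX.real_toNNReal)]
    rw [← integral_const_mul]
    refine integral_congr_ae (hXpos.mono fun ω hω => ?_)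
    simp only [NNReal.smul_def, Real.coe_toNNReal _ hω.le, smul_eq_mul]
    rw [← mul_assoc, mul_max_of_nonneg _ _ (by positivity : (0:ℝ) ≤ K * X ω),
      mul_zero]
    congr 1
    field_simp
end

section
/- Conditional domestic–foreign option duality (probabilistic form of the Lemma): let (Ω, F, P) be a probability space, let X : Ω → ℝ be measurable with X > 0 P-almost surely and ∫ X dP = 1, let Q = P.withDensity(X), and let G ⊆ F be a sub-σ-algebra. Then for every real K > 0, P-almost surely: E_P[max(X − K, 0) | G] = K · E_P[X | G] · E_Q[max(1/K − 1/X, 0) | G], where E_P[· | G] and E_Q[· | G] denote conditional expectations with respect to G under P and Q respectively. -/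
/-!
Pointwise, `(X - K)⁺ = K · X · (1/K - 1/X)⁺` wherever `X > 0`, so it suffices to know the abstract
Bayes formula `E_P[X Y | G] = E_P[X | G] · E_Q[Y | G]` for `Q = X · P`. Its proof compares integrals
over `G`-measurable sets: with `h = E_Q[Y | G]`, which is `G`-measurable,
`∫_s E_P[X h | G] dP = ∫_s X h dP = ∫_s h dQ = ∫_s Y dQ = ∫_s X Y dP`, and `h` can be pulled out of
`E_P[X h | G]`.
-/

open MeasureTheory

namespace MeasureTheory

variable {Ω : Type*} {m m₀ : MeasurableSpace Ω} {P : Measure Ω} {X : Ω → ℝ}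

theorem integrable_withDensity_ofReal_iff (hX : Measurable X) (hX₀ : 0 ≤ᵐ[P] X) {g : Ω → ℝ} :
    Integrable g (P.withDensity fun ω => ENNReal.ofReal (X ω)) ↔
      Integrable (fun ω => X ω * g ω) P := by
  rw [integrable_withDensity_iff_integrable_smul' hX.ennreal_ofReal
    (.of_forall fun _ => ENNReal.ofReal_lt_top)]
  refine integrable_congr ?_
  filter_upwards [hX₀] with ω hω
  rw [ENNReal.toReal_ofReal hω, smul_eq_mul]

theorem setIntegral_withDensity_ofReal (hX : Measurable X) (hX₀ : 0 ≤ᵐ[P] X) (g : Ω → ℝ)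
    {s : Set Ω} (hs : MeasurableSet s) :
    ∫ ω in s, g ω ∂P.withDensity (fun ω => ENNReal.ofReal (X ω)) = ∫ ω in s, X ω * g ω ∂P := by
  rw [setIntegral_withDensity_eq_setIntegral_toReal_smul hX.ennreal_ofReal
    (.of_forall fun _ => ENNReal.ofReal_lt_top) g hs]
  refine setIntegral_congr_ae hs ?_
  filter_upwards [hX₀] with ω hω _
  rw [ENNReal.toReal_ofReal hω, smul_eq_mul]

theorem condExp_mul_eq_condExp_mul_condExp_withDensity (hm : m ≤ m₀) [SigmaFinite (P.trim hm)]
    (hX : Measurable X) (hX₀ : 0 ≤ᵐ[P] X) (hX_int : Integrable X P) {Y : Ω → ℝ}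
    (hY : Integrable Y (P.withDensity fun ω => ENNReal.ofReal (X ω))) :
    P[fun ω => X ω * Y ω|m] =ᵐ[P]
      fun ω => P[X|m] ω * (P.withDensity fun ω => ENNReal.ofReal (X ω))[Y|m] ω := by
  set Q := P.withDensity fun ω => ENNReal.ofReal (X ω)
  have : IsFiniteMeasure Q := isFiniteMeasure_withDensity_ofReal hX_int.2
  set h := Q[Y|m]
  have hXh : Integrable (h * X) P := by
    rw [mul_comm]
    exact (integrable_withDensity_ofReal_iff hX hX₀).1 integrable_condExp
  have hXY : Integrable (fun ω => X ω * Y ω) P := (integrable_withDensity_ofReal_iff hX hX₀).1 hY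
  have same_integrals : P[h * X|m] =ᵐ[P] P[fun ω => X ω * Y ω|m] := by
    refine ae_eq_condExp_of_forall_setIntegral_eq hm hXY
      (fun s _ _ => integrable_condExp.integrableOn) (fun s hs _ => ?_)
      stronglyMeasurable_condExp.aestronglyMeasurable
    calc ∫ ω in s, P[h * X|m] ω ∂P = ∫ ω in s, X ω * h ω ∂P := by
          rw [setIntegral_condExp hm hXh hs]; simp only [Pi.mul_apply, mul_comm]
      _ = ∫ ω in s, h ω ∂Q := (setIntegral_withDensity_ofReal hX hX₀ h (hm s hs)).symm
      _ = ∫ ω in s, Y ω ∂Q := setIntegral_condExp hm hY hs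
      _ = ∫ ω in s, X ω * Y ω ∂P := setIntegral_withDensity_ofReal hX hX₀ Y (hm s hs)
  filter_upwards [same_integrals,
    condExp_mul_of_stronglyMeasurable_left stronglyMeasurable_condExp hXh hX_int] with ω h₁ h₂
  rw [← h₁, h₂, Pi.mul_apply, mul_comm]

end MeasureTheory

theorem max_sub_zero_eq_mul_max_one_div_sub_one_div {x K : ℝ} (hK : 0 < K) (hx : 0 < x) :
    max (x - K) 0 = K * (x * max (1 / K - 1 / x) 0) := by
  rw [← mul_assoc, mul_max_of_nonneg _ _ (by positivity), mul_zero]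
  congr 1
  field_simp

/-- Conditional domestic–foreign option duality. -/
theorem conditional_domestic_foreign_duality
    {Ω : Type*} {mF : MeasurableSpace Ω} (P : Measure Ω) [IsProbabilityMeasure P]
    (X : Ω → ℝ) (hX : Measurable X) (hXpos : ∀ᵐ ω ∂P, 0 < X ω)
    (hXint : ∫ ω, X ω ∂P = 1)
    (Q : Measure Ω) (hQ : Q = P.withDensity (fun ω => ENNReal.ofReal (X ω)))
    (G : MeasurableSpace Ω) (hG : G ≤ mF)
    (K : ℝ) (hK : 0 < K) :
    ∀ᵐ ω ∂P,
      (P[fun ω => max (X ω - K) 0|G]) ω =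
        K * (P[X|G]) ω * (Q[fun ω => max (1 / K - 1 / X ω) 0|G]) ω := by
  subst hQ
  set Y := fun ω => max (1 / K - 1 / X ω) 0
  have hX₀ : 0 ≤ᵐ[P] X := hXpos.mono fun _ h => h.le
  have hX_int : Integrable X P := .of_integral_ne_zero (by simp [hXint])
  have payoff : (fun ω => max (X ω - K) 0) =ᵐ[P] K • fun ω => X ω * Y ω := by
    filter_upwards [hXpos] with ω hω
    exact max_sub_zero_eq_mul_max_one_div_sub_one_div hK hω
  have hXY : Integrable (fun ω => X ω * Y ω) P := by
    refine ((hX_int.sub (integrable_const K)).pos_part.const_mul K⁻¹).congr ?_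
    filter_upwards [payoff] with ω hω
    simp [hω, hK.ne']
  have hY := (integrable_withDensity_ofReal_iff hX hX₀).2 hXY
  filter_upwards [(condExp_congr_ae payoff).trans (condExp_smul K _ G),
    condExp_mul_eq_condExp_mul_condExp_withDensity hG hX hX₀ hX_int hY] with ω h₁ h₂
  rw [h₁, Pi.smul_apply, h₂, smul_eq_mul, mul_assoc]
end
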